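/- A connected claw-free finite simple graph G has a unique perfect matching if and only if G belongs to the class 𝒢. -/

import Mathlib

/-- A graph is claw-free if it has no induced subgraph isomorphic to `K_{1,3}`. -/
def ClawFree {V : Type*} (G : SimpleGraph V) : Prop :=
  ¬ ∃ a b c d : V, a ≠ b ∧ a ≠ c ∧ a ≠ d ∧ b ≠ c ∧ b ≠ d ∧ c ≠ d ∧
    G.Adj a b ∧ G.Adj a c ∧ G.Adj a d ∧ ¬ G.Adj b c ∧ ¬ G.Adj b d ∧ ¬ G.Adj c d

/-- Operation 1: add two new vertices `x = inr 0` and `y = inr 1`, and the three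
new edges `xy`, `xu`, `yu`. -/
def AddOp1 {V : Type*} (G : SimpleGraph V) (u : V) : SimpleGraph (V ⊕ Fin 2) :=
  SimpleGraph.fromRel fun a b =>
    match a, b with
    | Sum.inl a, Sum.inl b => G.Adj a b
    | Sum.inl a, Sum.inr _ => a = u
    | Sum.inr _, Sum.inr _ => True
    | _, _ => False

/-- Operation 2: add two new vertices `x = inr 0` and `y = inr 1`, the new edge `xy`,
and new edges between `x` and all vertices of `C`. -/
def AddOp2 {V : Type*} (G : SimpleGraph V) (C : Set V) : SimpleGraph (V ⊕ Fin 2) :=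
  SimpleGraph.fromRel fun a b =>
    match a, b with
    | Sum.inl a, Sum.inl b => G.Adj a b
    | Sum.inl a, Sum.inr i => i = 0 ∧ a ∈ C
    | Sum.inr _, Sum.inr _ => True
    | _, _ => False

/-- The class `𝒢`: obtained from `K₂` by iteratively applying Operation 1 (at a
simplicial vertex `u`) and Operation 2 (at a non-empty clique `C` such that
`N_G(u) \ C` is a clique for every `u ∈ C`), considered up to isomorphism. -/
inductive InClassG : ∀ (V : Type), SimpleGraph V → Prop
  | base : InClassG (Fin 2) ⊤
  | op1 {V : Type} (G : SimpleGraph V) (u : V)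
      (hu : G.IsClique (G.neighborSet u)) :
      InClassG V G → InClassG (V ⊕ Fin 2) (AddOp1 G u)
  | op2 {V : Type} (G : SimpleGraph V) (C : Set V) (hne : C.Nonempty)
      (hC : G.IsClique C) (hnbr : ∀ u ∈ C, G.IsClique (G.neighborSet u \ C)) :
      InClassG V G → InClassG (V ⊕ Fin 2) (AddOp2 G C)
  | iso {V W : Type} (G : SimpleGraph V) (H : SimpleGraph W) (e : G ≃g H) :
      InClassG V G → InClassG W H

/-!
A perfect matching is encoded by its partner map `μ`, an involution with `v ~ μ v`.

Both operations preserve uniqueness: the new vertex `y` can only be matched to `x` (in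
Operation 1 because `x` and `y` cannot both be matched to `u`), and the rest of the matching is a
perfect matching of the old graph.

Conversely, let `μ` be the unique pairing of a connected claw-free graph and take a longest
`μ`-alternating path `x₀, μ x₀, x₁, μ x₁, …, xₖ, μ xₖ`. By maximality every neighbour of `x₀` lies
on the path. An edge `x₀ — μ xᵢ` with `i ≥ 1` closes an alternating cycle, and rotating `μ` along
it gives a second pairing. An edge `x₀ — xᵢ` with `i ≥ 2` forces, by claw-freeness at `xᵢ`, the
edge `μ xᵢ₋₁ — μ xᵢ`, and again an alternating cycle. Hence `N(x₀) ⊆ {μ x₀, x₁}`. If `x₀ ~ x₁`,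
the same holds for the path `μ x₀, x₀, x₁, …`, so `x₀, μ x₀, x₁` is a pendant triangle; otherwise
`x₀` is a pendant vertex. Deleting `x₀, μ x₀` thus undoes Operation 1 or Operation 2,
claw-freeness gives the clique conditions, and the smaller graph is again connected, claw-free
and uniquely matchable, so induction on the number of vertices applies.
-/

open Function Sum

section ClawFree

variable {V W : Type*} {G : SimpleGraph V}

theorem ClawFree.adj_of_not_adj (hcf : ClawFree G) {a b c d : V} (hab : G.Adj a b)
    (hac : G.Adj a c) (had : G.Adj a d) (hbc : b ≠ c) (hbd : b ≠ d) (hcd : c ≠ d)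
    (h1 : ¬G.Adj b c) (h2 : ¬G.Adj b d) : G.Adj c d := by
  by_contra h3
  exact hcf ⟨a, b, c, d, hab.ne, hac.ne, had.ne, hbc, hbd, hcd, hab, hac, had, h1, h2, h3⟩

theorem ClawFree.comap (hcf : ClawFree G) {f : W → V} (hf : Injective f) :
    ClawFree (G.comap f) := by
  rintro ⟨a, b, c, d, h⟩
  exact hcf ⟨f a, f b, f c, f d, by simpa only [hf.ne_iff, SimpleGraph.comap_adj] using h⟩

end ClawFree

theorem List.IsChain.rel_formPerm {α : Type*} [DecidableEq α] {R : α → α → Prop}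
    {l : List α} (hl : l.Nodup) (hc : l.IsChain R)
    (hclose : ∀ h : l ≠ [], R (l.getLast h) (l.head h)) {v : α} (hv : v ∈ l) :
    R v (l.formPerm v) := by
  obtain ⟨i, hi, rfl⟩ := List.getElem_of_mem hv
  rw [List.formPerm_apply_getElem _ hl]
  rcases Nat.lt_or_ge (i + 1) l.length with h | h
  · simpa only [Nat.mod_eq_of_lt h] using hc.getElem i h
  · have hne : l ≠ [] := List.ne_nil_of_length_pos (by omega)
    have := hclose hne
    rw [List.getLast_eq_getElem, List.head_eq_getElem] at this
    simpa only [show i = l.length - 1 by omega, Nat.sub_add_cancel (by omega : 1 ≤ l.length),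
      Nat.mod_self] using this

namespace SimpleGraph

variable {V W : Type*} {G : SimpleGraph V} {τ μ : V → V}

/-! ### Pairings -/

def IsPairing (G : SimpleGraph V) (τ : V → V) : Prop :=
  Involutive τ ∧ ∀ v, G.Adj v (τ v)

lemma IsPairing.ne (hτ : G.IsPairing τ) (v : V) : τ v ≠ v := (hτ.2 v).ne'

lemma IsPairing.injective (hτ : G.IsPairing τ) : Injective τ := hτ.1.injective

def IsPairing.toSubgraph (hτ : G.IsPairing τ) : G.Subgraph where
  verts := Set.univ
  Adj v w := τ v = w
  adj_sub := by rintro v _ rfl; exact hτ.2 v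
  edge_vert _ := trivial
  symm := ⟨by rintro v _ rfl; exact hτ.1 v⟩

lemma IsPairing.isPerfectMatching_toSubgraph (hτ : G.IsPairing τ) :
    hτ.toSubgraph.IsPerfectMatching :=
  Subgraph.isPerfectMatching_iff.2 fun _ => existsUnique_eq'

lemma IsPairing.of_isPerfectMatching {M : G.Subgraph} (hM : M.IsPerfectMatching)
    (hτ : ∀ v, M.Adj v (τ v)) : G.IsPairing τ :=
  ⟨fun v => hM.1.eq_of_adj_left (hτ (τ v)) (hτ v).symm, fun v => (hτ v).adj_sub⟩

noncomputable def perfectMatchingEquivPairing (G : SimpleGraph V) :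
    {M : G.Subgraph // M.IsPerfectMatching} ≃ {τ : V → V // G.IsPairing τ} where
  toFun M := ⟨fun v => (M.2.1 (M.2.2 v)).exists.choose,
    .of_isPerfectMatching M.2 fun v => (M.2.1 (M.2.2 v)).exists.choose_spec⟩
  invFun τ := ⟨τ.2.toSubgraph, τ.2.isPerfectMatching_toSubgraph⟩
  left_inv := by
    rintro ⟨M, hM⟩
    ext1
    refine Subgraph.ext (Subgraph.isSpanning_iff.1 hM.2).symm ?_
    ext v w
    exact ⟨fun hvw => hvw ▸ (hM.1 (hM.2 v)).exists.choose_spec,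
      fun hvw => hM.1.eq_of_adj_left (hM.1 (hM.2 v)).exists.choose_spec hvw⟩
  right_inv := by
    rintro ⟨τ, hτ⟩
    ext1
    funext v
    exact (hτ.isPerfectMatching_toSubgraph.1 trivial).unique
      (hτ.isPerfectMatching_toSubgraph.1 trivial).exists.choose_spec rfl

lemma existsUnique_isPerfectMatching_iff :
    (∃! M : G.Subgraph, M.IsPerfectMatching) ↔ ∃! τ, G.IsPairing τ :=
  Equiv.existsUnique_subtype_congr G.perfectMatchingEquivPairing

lemma IsPairing.map {H : SimpleGraph W} (e : G ≃g H) (hτ : G.IsPairing τ) :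
    H.IsPairing (e ∘ τ ∘ e.symm) :=
  ⟨fun w => by simp [hτ.1 _], fun w => by simpa using e.map_adj_iff.2 (hτ.2 (e.symm w))⟩

lemma Iso.existsUnique_isPairing {H : SimpleGraph W} (e : G ≃g H) (h : ∃! τ, G.IsPairing τ) :
    ∃! σ, H.IsPairing σ := by
  obtain ⟨τ, hτ, huniq⟩ := h
  refine ⟨_, hτ.map e, fun σ hσ => funext fun w => ?_⟩
  simp [← huniq _ (hσ.map e.symm)]

lemma existsUnique_isPairing_top_fin_two : ∃! τ, (⊤ : SimpleGraph (Fin 2)).IsPairing τ := by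
  refine ⟨Fin.rev, ⟨Fin.rev_rev, by decide⟩, fun τ hτ => funext fun i => ?_⟩
  have := hτ.ne i
  revert this
  generalize τ i = j
  fin_cases i <;> fin_cases j <;> decide

lemma IsPairing.conj (hμ : G.IsPairing μ) (σ : Equiv.Perm V)
    (hσ : ∀ v, σ v ≠ v → σ (μ v) = μ v ∧ G.Adj (μ v) (σ v)) :
    G.IsPairing (σ ∘ μ ∘ σ.symm) := by
  refine ⟨fun w => by simp [hμ.1 _], fun w => ?_⟩
  obtain ⟨v, rfl⟩ := σ.surjective w
  simp only [comp_apply, Equiv.symm_apply_apply]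
  by_cases hv : σ v = v
  · rw [hv]
    by_cases hμv : σ (μ v) = μ v
    · rw [hμv]
      exact hμ.2 v
    · simpa [hμ.1 v] using (hσ _ hμv).2
  · rw [(hσ v hv).1]
    exact (hσ v hv).2.symm

section TwoNewVertices

variable {H : SimpleGraph (V ⊕ Fin 2)} {σ : V ⊕ Fin 2 → V ⊕ Fin 2}

lemma IsPairing.sumMap (hτ : (H.comap inl).IsPairing τ) (h01 : H.Adj (inr 0) (inr 1)) :
    H.IsPairing (Sum.map τ Fin.rev) := by
  refine ⟨fun x => by cases x <;> simp [hτ.1 _], ?_⟩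
  rintro (v | i)
  · exact hτ.2 v
  · fin_cases i
    exacts [h01, h01.symm]

lemma IsPairing.exists_eq_sumMap (hσ : H.IsPairing σ) (h0 : σ (inr 0) = inr 1) :
    ∃ τ, (H.comap inl).IsPairing τ ∧ σ = Sum.map τ Fin.rev := by
  have hinr : ∀ i, σ (inr i) = inr (Fin.rev i) :=
    Fin.forall_fin_two.2 ⟨h0, by rw [← h0, hσ.1]; rfl⟩
  have hinl : ∀ v, ∃ w, σ (inl v) = inl w := by
    intro v
    rcases h : σ (inl v) with w | i
    · exact ⟨w, rfl⟩
    · have := hσ.1 (inl v)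
      rw [h, hinr] at this
      cases this
  choose τ hτ using hinl
  have hστ : σ = Sum.map τ Fin.rev := funext <| by rintro (v | i); exacts [hτ v, hinr i]
  refine ⟨τ, ⟨fun v => ?_, fun v => ?_⟩, hστ⟩
  · simpa [hστ] using hσ.1 (inl v)
  · simpa [hτ] using hσ.2 (inl v)

theorem existsUnique_isPairing_iff_comap_inl (h01 : H.Adj (inr 0) (inr 1))
    (hforced : ∀ σ, H.IsPairing σ → σ (inr 0) = inr 1) :
    (∃! σ, H.IsPairing σ) ↔ ∃! τ, (H.comap inl).IsPairing τ := by
  constructor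
  · rintro ⟨σ, hσ, huniq⟩
    obtain ⟨τ, hτ, rfl⟩ := hσ.exists_eq_sumMap (hforced σ hσ)
    refine ⟨τ, hτ, fun τ' hτ' => funext fun v => ?_⟩
    simpa using congrFun (huniq _ (hτ'.sumMap h01)) (inl v)
  · rintro ⟨τ, hτ, huniq⟩
    refine ⟨_, hτ.sumMap h01, fun σ hσ => ?_⟩
    obtain ⟨τ', hτ', rfl⟩ := hσ.exists_eq_sumMap (hforced σ hσ)
    rw [huniq τ' hτ']

end TwoNewVertices

lemma Preconnected.forall_of_adj_imp (hG : G.Preconnected) {P : V → Prop}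
    (hP : ∀ ⦃x y⦄, G.Adj x y → P y → P x) {y : V} (hy : P y) (x : V) : P x := by
  obtain ⟨p⟩ := hG x y
  induction p with
  | nil => exact hy
  | cons h _ ih => exact hP h (ih hy)

theorem Preconnected.comap_inl {X : Type*} {H : SimpleGraph (V ⊕ X)} (hH : H.Preconnected)
    (hB : ∀ ⦃v w i j⦄, v ≠ w → H.Adj (inl v) (inr i) → H.Adj (inl w) (inr j) →
      H.Adj (inl v) (inl w)) :
    (H.comap inl).Preconnected := by
  intro v y
  let P : V ⊕ X → Prop := Sum.elim (fun v => (H.comap inl).Reachable v y)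
    fun _ => ∃ q j, H.Adj (inl q) (inr j) ∧ (H.comap inl).Reachable q y
  refine hH.forall_of_adj_imp (P := P) ?_ (y := inl y) (Reachable.refl y) (inl v)
  rintro (x | i) (z | j) hxz hz
  · exact (Adj.reachable (G := H.comap inl) hxz).trans hz
  · obtain ⟨q, k, hq, hqy⟩ := hz
    obtain rfl | hxq := eq_or_ne x q
    · exact hqy
    · exact (Adj.reachable (G := H.comap inl) (hB hxq hxz hq)).trans hqy
  · exact ⟨z, i, hxz.symm, hz⟩
  · exact hz

/-! ### Alternating paths -/

/-- `[x₀, …, xₖ]` encodes the `μ`-alternating path `x₀, μ x₀, x₁, μ x₁, …, xₖ, μ xₖ`. -/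
def IsAltPath (G : SimpleGraph V) (μ : V → V) (xs : List V) : Prop :=
  xs.Nodup ∧ (∀ x ∈ xs, μ x ∉ xs) ∧ xs.IsChain fun x y => G.Adj (μ x) y

lemma isAltPath_singleton (hμ : G.IsPairing μ) (v : V) : IsAltPath G μ [v] :=
  ⟨List.nodup_singleton v, by simpa using hμ.ne v, List.isChain_singleton v⟩

lemma IsAltPath.of_append_left {l₁ l₂ : List V} (h : IsAltPath G μ (l₁ ++ l₂)) :
    IsAltPath G μ l₁ :=
  ⟨h.1.of_append_left, fun x hx hμx => h.2.1 x (by simp [hx]) (by simp [hμx]),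
    h.2.2.left_of_append⟩

lemma IsAltPath.cons_partner (hμ : G.IsPairing μ) {x u : V} {xs : List V}
    (h : IsAltPath G μ (x :: xs)) (hu : G.Adj u x) (hux : u ∉ x :: xs)
    (hμu : ∀ y ∈ x :: xs, μ y ≠ u) : IsAltPath G μ (μ u :: x :: xs) := by
  refine ⟨List.nodup_cons.2 ⟨fun hm => hμu _ hm (hμ.1 u), h.1⟩, ?_, ?_⟩
  · intro y hy hμy
    rcases List.mem_cons.1 hy with rfl | hy <;> rcases List.mem_cons.1 hμy with h' | h'
    · rw [hμ.1] at h'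
      exact hμ.ne u h'.symm
    · rw [hμ.1] at h'
      exact hux h'
    · exact hux (hμ.injective h' ▸ hy)
    · exact h.2.1 y hy h'
  · exact List.isChain_cons_cons.2 ⟨by rwa [hμ.1], h.2.2⟩

lemma IsAltPath.replace_partner (hμ : G.IsPairing μ) {l₁ l₂ : List V} {y : V}
    (h : IsAltPath G μ (l₁ ++ y :: l₂))
    (hc : (l₁ ++ μ y :: l₂).IsChain fun x y => G.Adj (μ x) y) :
    IsAltPath G μ (l₁ ++ μ y :: l₂) := by
  obtain ⟨hnd, hμL, -⟩ := h
  have hy : y ∉ l₁ ++ l₂ := (List.nodup_cons.1 (List.nodup_middle.1 hnd)).1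
  have hμy : μ y ∉ l₁ ++ y :: l₂ := hμL y (by simp)
  refine ⟨List.nodup_middle.2 (List.nodup_cons.2 ⟨fun hm => hμy ?_,
    (List.nodup_cons.1 (List.nodup_middle.1 hnd)).2⟩), fun x hx hμx => ?_, hc⟩
  · simp only [List.mem_append, List.mem_cons] at hm ⊢
    tauto
  simp only [List.mem_append, List.mem_cons] at hx hμx hy hμy
  rcases hx with hx | rfl | hx
  · rcases hμx with h' | h' | h'
    · exact hμL x (by simp [hx]) (by simp [h'])
    · exact hy (Or.inl (hμ.injective h' ▸ hx))
    · exact hμL x (by simp [hx]) (by simp [h'])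
  · rw [hμ.1] at hμx
    rcases hμx with h' | h' | h'
    · exact hy (Or.inl h')
    · exact hμ.ne y h'.symm
    · exact hy (Or.inr h')
  · rcases hμx with h' | h' | h'
    · exact hμL x (by simp [hx]) (by simp [h'])
    · exact hy (Or.inr (hμ.injective h' ▸ hx))
    · exact hμL x (by simp [hx]) (by simp [h'])

/-- Otherwise rotating `μ` along the alternating cycle closed by this edge gives a second
pairing. -/
theorem IsAltPath.not_adj_partner_last_head (hμ : G.IsPairing μ)
    (huniq : ∀ τ, G.IsPairing τ → τ = μ) {x y : V} {xs : List V}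
    (h : IsAltPath G μ (x :: (xs ++ [y]))) : ¬G.Adj (μ y) x := by
  classical
  intro hyx
  set L := x :: (xs ++ [y])
  have hadj : ∀ v ∈ L, G.Adj (μ v) (L.formPerm v) :=
    fun v hv => h.2.2.rel_formPerm h.1 (fun _ => by simpa [L] using hyx) hv
  have hσ := huniq _ (hμ.conj L.formPerm fun v hv =>
    ⟨List.formPerm_apply_of_notMem (h.2.1 v (List.mem_of_formPerm_apply_ne hv)),
      hadj v (List.mem_of_formPerm_apply_ne hv)⟩)
  have h1 : L.formPerm = 1 := Equiv.ext fun v => by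
    by_cases hv : v ∈ L
    · have := congrFun hσ (L.formPerm v)
      simp only [comp_apply, Equiv.symm_apply_apply, List.formPerm_apply_of_notMem (h.2.1 v hv)]
        at this
      exact (hμ.injective this).symm
    · exact List.formPerm_apply_of_notMem hv
  have := (List.formPerm_eq_one_iff L h.1).1 h1
  simp [L] at this

lemma IsAltPath.not_adj_head_partner (hμ : G.IsPairing μ) (huniq : ∀ τ, G.IsPairing τ → τ = μ)
    {x y : V} {xs : List V} (h : IsAltPath G μ (x :: xs)) (hy : y ∈ xs) : ¬G.Adj x (μ y) := by
  obtain ⟨s, t, rfl⟩ := List.append_of_mem hy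
  have hpre : IsAltPath G μ (x :: (s ++ [y])) :=
    IsAltPath.of_append_left (l₂ := t) (by simpa using h)
  exact fun hxy => hpre.not_adj_partner_last_head hμ huniq hxy.symm

lemma IsAltPath.not_adj_head_of_mem (hμ : G.IsPairing μ) (huniq : ∀ τ, G.IsPairing τ → τ = μ)
    (hcf : ClawFree G) {x y z : V} {s t : List V} (h : IsAltPath G μ (x :: (s ++ z :: y :: t))) :
    ¬G.Adj x y := by
  intro hxy
  have hpre : IsAltPath G μ ((x :: (s ++ [z])) ++ [y]) :=
    IsAltPath.of_append_left (l₂ := t) (by simpa using h)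
  have hzy : G.Adj (μ z) y :=
    (List.isChain_cons_cons.1 (h.2.2.infix (l₁ := [z, y]) ⟨x :: s, t, by simp⟩)).1
  have hx : x ∈ x :: (s ++ z :: y :: t) := by simp
  have hzy' : z ≠ y := fun e => (List.nodup_cons.1 h.1.of_cons.of_append_right).1 (by simp [e])
  have hμyz : G.Adj (μ y) (μ z) := hcf.adj_of_not_adj hxy.symm (hμ.2 y) hzy.symm
    (fun e => h.2.1 y (by simp) (e ▸ hx)) (fun e => h.2.1 z (by simp) (e ▸ hx))
    (hμ.injective.ne hzy'.symm)
    (h.not_adj_head_partner hμ huniq (by simp)) (h.not_adj_head_partner hμ huniq (by simp))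
  have hcyc : IsAltPath G μ (x :: (s ++ [z] ++ [μ y])) := by
    simpa using hpre.replace_partner hμ (l₂ := [])
      (hpre.2.2.left_of_append.append (List.isChain_singleton _) fun a ha => by
        rw [← List.cons_append, List.getLast?_append] at ha
        simpa [show a = z by simpa [eq_comm] using ha] using hμyz.symm)
  exact hcyc.not_adj_partner_last_head hμ huniq (by rw [hμ.1]; exact hxy.symm)

lemma exists_isAltPath_forall_length_le [Fintype V] [Nonempty V] (hμ : G.IsPairing μ) :
    ∃ x xs, IsAltPath G μ (x :: xs) ∧ ∀ ys, IsAltPath G μ ys → ys.length ≤ xs.length + 1 := by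
  set S := {n | ∃ ys, IsAltPath G μ ys ∧ ys.length = n}
  have hbdd : BddAbove S := ⟨Fintype.card V, by rintro _ ⟨ys, hys, rfl⟩; exact hys.1.length_le_card⟩
  obtain ⟨v⟩ := ‹Nonempty V›
  have h1 : 1 ∈ S := ⟨[v], isAltPath_singleton hμ v, rfl⟩
  obtain ⟨ys, hys, hlen⟩ := Nat.sSup_mem ⟨1, h1⟩ hbdd
  obtain ⟨x, xs, rfl⟩ := List.exists_cons_of_ne_nil (List.ne_nil_of_length_pos
    (hlen ▸ le_csSup hbdd h1))
  refine ⟨x, xs, hys, fun zs hzs => ?_⟩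
  rw [← List.length_cons, hlen]
  exact le_csSup hbdd ⟨zs, hzs, rfl⟩

lemma IsAltPath.adj_head (hμ : G.IsPairing μ) (huniq : ∀ τ, G.IsPairing τ → τ = μ)
    (hcf : ClawFree G) {x u : V} {xs : List V} (h : IsAltPath G μ (x :: xs))
    (hmax : ∀ ys, IsAltPath G μ ys → ys.length ≤ xs.length + 1) (hu : G.Adj x u) :
    u = μ x ∨ xs.head? = some u := by
  have hmem : u ∈ x :: xs ∨ ∃ y ∈ x :: xs, μ y = u := by
    by_contra! hnot
    simpa using hmax _ (h.cons_partner hμ hu.symm hnot.1 hnot.2)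
  rcases hmem with hu' | ⟨y, hy, rfl⟩
  · rcases List.mem_cons.1 hu' with rfl | hu'
    · exact (hu.ne rfl).elim
    obtain ⟨s, t, rfl⟩ := List.append_of_mem hu'
    rcases List.eq_nil_or_concat s with rfl | ⟨s, z, rfl⟩
    · simp
    · exact absurd hu (IsAltPath.not_adj_head_of_mem hμ huniq hcf (s := s) (z := z) (t := t)
        (by simpa using h))
  · rcases List.mem_cons.1 hy with rfl | hy
    · exact Or.inl rfl
    · exact absurd hu (h.not_adj_head_partner hμ huniq hy)

theorem exists_pendant_or_triangle [Fintype V] [Nonempty V] (hcf : ClawFree G)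
    (hμ : G.IsPairing μ) (huniq : ∀ τ, G.IsPairing τ → τ = μ) :
    ∃ a, (∀ v, G.Adj (μ a) v ↔ v = a) ∨
      ∃ u, (∀ v, G.Adj a v ↔ v = μ a ∨ v = u) ∧ ∀ v, G.Adj (μ a) v ↔ v = a ∨ v = u := by
  obtain ⟨x, xs, h, hmax⟩ := exists_isAltPath_forall_length_le hμ
  have hx : ∀ v, G.Adj x v → v = μ x ∨ xs.head? = some v :=
    fun _ hv => h.adj_head hμ huniq hcf hmax hv
  have hpendant : (∀ v, G.Adj x v → v = μ x) → ∃ a, ∀ v, G.Adj (μ a) v ↔ v = a :=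
    fun hN => ⟨μ x, fun v => by rw [hμ.1]; exact ⟨hN v, by rintro rfl; exact hμ.2 x⟩⟩
  cases xs with
  | nil => exact (hpendant fun v hv => by simpa using hx v hv).imp fun _ => Or.inl
  | cons y ys =>
    by_cases hxy : G.Adj x y
    · have h' : IsAltPath G μ (μ x :: y :: ys) :=
        h.replace_partner hμ (l₁ := []) (List.isChain_cons_cons.2 ⟨by rwa [hμ.1], h.2.2.tail⟩)
      refine ⟨x, Or.inr ⟨y, fun v => ⟨fun hv => by simpa [eq_comm] using hx v hv, ?_⟩,
        fun v => ⟨fun hv => by simpa [hμ.1 x, eq_comm] using h'.adj_head hμ huniq hcf hmax hv, ?_⟩⟩⟩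
      · rintro (rfl | rfl)
        exacts [hμ.2 x, hxy]
      · rintro (rfl | rfl)
        exacts [(hμ.2 v).symm, (List.isChain_cons_cons.1 h.2.2).1]
    · refine (hpendant fun v hv => (hx v hv).resolve_right fun hyv => hxy ?_).imp fun _ => Or.inl
      rw [List.head?_cons, Option.some_inj] at hyv
      rwa [hyv]

end SimpleGraph

open SimpleGraph

/-! ### The two operations -/

section AddOp

variable {V : Type*} {G : SimpleGraph V} {u v w : V} {C : Set V} {i j : Fin 2}
  {σ : V ⊕ Fin 2 → V ⊕ Fin 2}

@[simp] lemma addOp1_adj_inl_inl : (AddOp1 G u).Adj (inl v) (inl w) ↔ G.Adj v w := by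
  simpa [AddOp1, G.adj_comm w v] using fun h : G.Adj v w => h.ne
@[simp] lemma addOp1_adj_inl_inr : (AddOp1 G u).Adj (inl v) (inr i) ↔ v = u := by simp [AddOp1]
@[simp] lemma addOp1_adj_inr_inl : (AddOp1 G u).Adj (inr i) (inl v) ↔ v = u := by simp [AddOp1]
@[simp] lemma addOp1_adj_inr_inr : (AddOp1 G u).Adj (inr i) (inr j) ↔ i ≠ j := by simp [AddOp1]
@[simp] lemma addOp2_adj_inl_inl : (AddOp2 G C).Adj (inl v) (inl w) ↔ G.Adj v w := by
  simpa [AddOp2, G.adj_comm w v] using fun h : G.Adj v w => h.ne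
@[simp] lemma addOp2_adj_inl_inr : (AddOp2 G C).Adj (inl v) (inr i) ↔ i = 0 ∧ v ∈ C := by
  simp [AddOp2]
@[simp] lemma addOp2_adj_inr_inl : (AddOp2 G C).Adj (inr i) (inl v) ↔ i = 0 ∧ v ∈ C := by
  simp [AddOp2]
@[simp] lemma addOp2_adj_inr_inr : (AddOp2 G C).Adj (inr i) (inr j) ↔ i ≠ j := by simp [AddOp2]

@[simp] lemma comap_inl_addOp1 : (AddOp1 G u).comap inl = G := by ext; simp
@[simp] lemma comap_inl_addOp2 : (AddOp2 G C).comap inl = G := by ext; simp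

theorem SimpleGraph.IsPairing.addOp1_apply_inr_zero (hσ : (AddOp1 G u).IsPairing σ) :
    σ (inr 0) = inr 1 := by
  have hnbr : ∀ i, σ (inr i) = inr (Fin.rev i) ∨ σ (inr i) = inl u := by
    intro i
    have := hσ.2 (inr i)
    rcases h : σ (inr i) with v | j <;> rw [h] at this
    · simp_all
    · fin_cases i <;> fin_cases j <;> simp_all
  by_contra h0
  have h0u : σ (inr 0) = inl u := (hnbr 0).resolve_left h0
  have h1u : σ (inr 1) = inl u :=
    (hnbr 1).resolve_left fun h1 => h0 (by rw [show (0 : Fin 2) = Fin.rev 1 from rfl, ← h1, hσ.1])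
  exact absurd (hσ.1.injective (h0u.trans h1u.symm)) (by simp)

theorem SimpleGraph.IsPairing.addOp2_apply_inr_zero (hσ : (AddOp2 G C).IsPairing σ) :
    σ (inr 0) = inr 1 := by
  have h1 : σ (inr 1) = inr 0 := by
    have := hσ.2 (inr 1)
    rcases h : σ (inr 1) with v | j <;> rw [h] at this
    · simp at this
    · fin_cases j <;> simp_all
  rw [← h1, hσ.1]

theorem existsUnique_isPairing_addOp1_iff :
    (∃! σ, (AddOp1 G u).IsPairing σ) ↔ ∃! τ, G.IsPairing τ := by
  simpa only [comap_inl_addOp1] using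
    existsUnique_isPairing_iff_comap_inl (by simp) fun σ hσ => hσ.addOp1_apply_inr_zero

theorem existsUnique_isPairing_addOp2_iff :
    (∃! σ, (AddOp2 G C).IsPairing σ) ↔ ∃! τ, G.IsPairing τ := by
  simpa only [comap_inl_addOp2] using
    existsUnique_isPairing_iff_comap_inl (by simp) fun σ hσ => hσ.addOp2_apply_inr_zero

lemma preconnected_of_addOp1 (h : (AddOp1 G u).Preconnected) : G.Preconnected := by
  simpa using h.comap_inl fun v w _ _ hvw hv hw => by simp_all

lemma preconnected_of_addOp2 (hC : G.IsClique C) (h : (AddOp2 G C).Preconnected) :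
    G.Preconnected := by
  refine comap_inl_addOp2 (G := G) (C := C) ▸ h.comap_inl fun v w _ _ hvw hv hw => ?_
  simp only [addOp2_adj_inl_inr, addOp2_adj_inl_inl] at hv hw ⊢
  exact hC hv.2 hw.2 hvw

lemma nonempty_of_connected_addOp2 [Nonempty V] (h : (AddOp2 G C).Connected) :
    C.Nonempty := by
  by_contra hC
  obtain rfl := Set.not_nonempty_iff_eq_empty.1 hC
  obtain ⟨v⟩ := ‹Nonempty V›
  have := h.preconnected.forall_of_adj_imp (P := fun x => x.isRight) ?_ (y := inr 0) rfl (inl v)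
  · simp at this
  · rintro (x | i) (z | j) <;> simp

lemma ClawFree.isClique_neighborSet_addOp1 (hcf : ClawFree (AddOp1 G u)) :
    G.IsClique (G.neighborSet u) := by
  intro x hx y hy hxy
  simpa using hcf.adj_of_not_adj (a := inl u) (b := inr 0) (c := inl x) (d := inl y) (by simp)
    (by simpa) (by simpa) (by simp) (by simp) (by simpa) (by simpa using hx.ne')
    (by simpa using hy.ne')

lemma ClawFree.isClique_addOp2 (hcf : ClawFree (AddOp2 G C)) : G.IsClique C := by
  intro x hx y hy hxy
  simpa using hcf.adj_of_not_adj (a := inr 0) (b := inr 1) (c := inl x) (d := inl y) (by simp)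
    (by simpa) (by simpa) (by simp) (by simp) (by simpa) (by simp) (by simp)

lemma ClawFree.isClique_neighborSet_sdiff_addOp2 (hcf : ClawFree (AddOp2 G C))
    (hv : v ∈ C) : G.IsClique (G.neighborSet v \ C) := by
  rintro x ⟨hvx, hx⟩ y ⟨hvy, hy⟩ hxy
  simpa using hcf.adj_of_not_adj (a := inl v) (b := inr 0) (c := inl x) (d := inl y)
    (by simpa) (by simpa) (by simpa) (by simp) (by simp) (by simpa) (by simpa) (by simpa)

lemma eq_addOp1_comap_inl {H : SimpleGraph (V ⊕ Fin 2)}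
    (h0 : ∀ x, H.Adj (inr 0) x ↔ x = inr 1 ∨ x = inl w)
    (h1 : ∀ x, H.Adj (inr 1) x ↔ x = inr 0 ∨ x = inl w) : H = AddOp1 (H.comap inl) w := by
  have hinr : ∀ i x, H.Adj (inr i) x ↔ x = inr (Fin.rev i) ∨ x = inl w :=
    Fin.forall_fin_two.2 ⟨h0, h1⟩
  ext (v | i) (v' | j)
  · simp
  · simp [H.adj_comm (inl v), hinr]
  · simp [hinr]
  · fin_cases i <;> fin_cases j <;> simp [hinr]

lemma eq_addOp2_comap_inl {H : SimpleGraph (V ⊕ Fin 2)} (h1 : ∀ x, H.Adj (inr 1) x ↔ x = inr 0) :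
    H = AddOp2 (H.comap inl) {v | H.Adj (inr 0) (inl v)} := by
  ext (v | i) (v' | j)
  · simp
  · fin_cases j <;> simp [H.adj_comm (inl v), h1]
  · fin_cases i <;> simp [h1]
  · fin_cases i <;> fin_cases j <;> simp [h1, H.adj_comm (inr 0)]

end AddOp

/-! ### The class `𝒢` -/

theorem InClassG.existsUnique_isPairing {V : Type} {G : SimpleGraph V} (h : InClassG V G) :
    ∃! τ, G.IsPairing τ := by
  induction h with
  | base => exact existsUnique_isPairing_top_fin_two
  | op1 _ _ _ _ ih => exact existsUnique_isPairing_addOp1_iff.2 ih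
  | op2 _ _ _ _ _ _ ih => exact existsUnique_isPairing_addOp2_iff.2 ih
  | iso _ _ e _ ih => exact e.existsUnique_isPairing ih

theorem InClassG.of_isEmpty {W : Type} [IsEmpty W] {H : SimpleGraph (W ⊕ Fin 2)}
    (h01 : H.Adj (inr 0) (inr 1)) : InClassG (W ⊕ Fin 2) H := by
  refine .iso ⊤ H ⟨(Equiv.emptySum W (Fin 2)).symm, fun {i j} => ?_⟩ .base
  fin_cases i <;> fin_cases j <;> simp [h01, h01.symm]

theorem InClassG.sum_of_pendant_or_triangle {W : Type} {H : SimpleGraph (W ⊕ Fin 2)}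
    (hconn : H.Connected) (hcf : ClawFree H) (hupm : ∃! σ, H.IsPairing σ)
    (hshape : (∀ x, H.Adj (inr 1) x ↔ x = inr 0) ∨ ∃ w,
      (∀ x, H.Adj (inr 0) x ↔ x = inr 1 ∨ x = inl w) ∧ ∀ x, H.Adj (inr 1) x ↔ x = inr 0 ∨ x = inl w)
    (hIH : ∀ G : SimpleGraph W, G.Connected → ClawFree G → (∃! τ, G.IsPairing τ) → InClassG W G) :
    InClassG (W ⊕ Fin 2) H := by
  rcases isEmpty_or_nonempty W with hW | hW
  · exact .of_isEmpty (by rcases hshape with h1 | ⟨w, -, h1⟩ <;> simp [H.adj_comm (inr 0), h1])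
  rcases hshape with h1 | ⟨w, h0, h1⟩
  · have hH := eq_addOp2_comap_inl h1
    generalize H.comap inl = G, {v | H.Adj (inr 0) (inl v)} = C at hH
    subst hH
    have hC := hcf.isClique_addOp2
    exact .op2 G C (nonempty_of_connected_addOp2 hconn) hC
      (fun _ => hcf.isClique_neighborSet_sdiff_addOp2)
      (hIH G ⟨preconnected_of_addOp2 hC hconn.preconnected⟩
        (by simpa using hcf.comap inl_injective) (existsUnique_isPairing_addOp2_iff.1 hupm))
  · have hH := eq_addOp1_comap_inl h0 h1
    generalize H.comap inl = G at hH
    subst hH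
    exact .op1 G w hcf.isClique_neighborSet_addOp1
      (hIH G ⟨preconnected_of_addOp1 hconn.preconnected⟩
        (by simpa using hcf.comap inl_injective) (existsUnique_isPairing_addOp1_iff.1 hupm))

def splitPairEquiv {V : Type*} [DecidableEq V] {a b : V} (hab : a ≠ b) :
    {v // v ≠ a ∧ v ≠ b} ⊕ Fin 2 ≃ V where
  toFun := Sum.elim Subtype.val ![a, b]
  invFun v := if ha : v = a then inr 0 else if hb : v = b then inr 1 else inl ⟨v, ha, hb⟩
  left_inv := by
    rintro (⟨v, ha, hb⟩ | i)
    · simp [ha, hb]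
    · fin_cases i <;> simp [hab.symm]
  right_inv v := by
    by_cases ha : v = a
    · simp [ha]
    · by_cases hb : v = b
      · subst hb
        simp [ha]
      · simp [ha, hb]

theorem InClassG.of_pendant_or_triangle {V : Type} [DecidableEq V] {G : SimpleGraph V} {a b : V}
    (hconn : G.Connected) (hcf : ClawFree G) (hupm : ∃! τ, G.IsPairing τ)
    (hshape : (∀ v, G.Adj b v ↔ v = a) ∨
      ∃ u, (∀ v, G.Adj a v ↔ v = b ∨ v = u) ∧ ∀ v, G.Adj b v ↔ v = a ∨ v = u)
    (hIH : ∀ G' : SimpleGraph {v // v ≠ a ∧ v ≠ b}, G'.Connected → ClawFree G' →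
      (∃! τ, G'.IsPairing τ) → InClassG _ G') :
    InClassG V G := by
  have hab : a ≠ b := by rcases hshape with hb | ⟨u, -, hb⟩ <;> exact ((hb a).2 (by simp)).ne'
  let e := Iso.comap (splitPairEquiv hab) G
  refine .iso _ G e (.sum_of_pendant_or_triangle (e.connected_iff.2 hconn)
    (hcf.comap (splitPairEquiv hab).injective) (e.symm.existsUnique_isPairing hupm) ?_ hIH)
  rcases hshape with hb | ⟨u, ha, hb⟩
  · refine Or.inl fun x => ?_
    rcases x with ⟨v, hva, hvb⟩ | i
    · simp [splitPairEquiv, hb, hva]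
    · fin_cases i <;> simp [splitPairEquiv, hb]
  · have hu : u ≠ a ∧ u ≠ b := ⟨((ha u).2 (by simp)).ne', ((hb u).2 (by simp)).ne'⟩
    refine Or.inr ⟨⟨u, hu⟩, fun x => ?_, fun x => ?_⟩ <;> rcases x with ⟨v, hva, hvb⟩ | i
    · simp [splitPairEquiv, ha, hvb]
    · fin_cases i <;> simp [splitPairEquiv, ha]
    · simp [splitPairEquiv, hb, hva]
    · fin_cases i <;> simp [splitPairEquiv, hb]

theorem InClassG.of_existsUnique_isPairing {V : Type} [Fintype V] {G : SimpleGraph V}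
    (hconn : G.Connected) (hcf : ClawFree G) (hupm : ∃! τ, G.IsPairing τ) : InClassG V G := by
  induction hn : Fintype.card V using Nat.strong_induction_on generalizing V with
  | _ n IH =>
  classical
  obtain ⟨μ, hμ, huniq⟩ := id hupm
  have := hconn.nonempty
  obtain ⟨a, hshape⟩ := exists_pendant_or_triangle hcf hμ huniq
  refine .of_pendant_or_triangle hconn hcf hupm hshape fun G' hconn' hcf' hupm' =>
    IH _ ?_ hconn' hcf' hupm' rfl
  have := Fintype.card_congr (splitPairEquiv (hμ.ne a).symm)
  simp only [Fintype.card_sum, Fintype.card_fin] at this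
  omega

theorem connected_clawfree_unique_pm_iff_classG (V : Type) [Fintype V]
    (G : SimpleGraph V) (hconn : G.Connected) (hcf : ClawFree G) :
    (∃! M : G.Subgraph, M.IsPerfectMatching) ↔ InClassG V G := by
  rw [existsUnique_isPerfectMatching_iff]
  exact ⟨.of_existsUnique_isPairing hconn hcf, InClassG.existsUnique_isPairing⟩
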